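/- arXiv:2212.07979 — 2 statements merged into one kernel-verified Lean document; each statement's English description precedes it below -/
import Mathlib

section
/- Let X and Y be languages over Σ and let b, d, e, g be words such that c := d ++ e is nonempty, b ++ c^i ++ d ∈ X for every i ∈ ℕ, and e ++ c^j ++ g ∈ Y for every j ∈ ℕ. Then for every N ∈ ℕ, the word b ++ c^(N+1) ++ g admits at least N+1 distinct decompositions as u ++ v with u ∈ X and v ∈ Y (namely u = b ++ c^i ++ d and v = e ++ c^(N−i) ++ g for i = 0, …, N). (Counting claim from the proof of the paper's Theorem 2(a), ⟸ direction.) -/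
/-! Shared definitions: words, word power, parse trees of regular expressions,
(un)ambiguity, finite/infinite ambiguity, and the Brabrand–Thomsen overlap. -/

universe u

variable {α : Type u}

/-- `wpow w n` is the `n`-fold concatenation `w^n` of the word `w` with itself. -/
def wpow (w : List α) : ℕ → List α
  | 0 => []
  | n + 1 => w ++ wpow w n

/-- Parse trees of a regular expression for a word, defined inductively:
the regex `ε` has a unique parse tree for the empty word; the character regex
for `a` has a unique parse tree for the word `[a]`; a parse tree of `R₁ + R₂`
(alternation) for `w` is a parse tree of `R₁` for `w` or a parse tree of `R₂`
for `w` (the two sides distinct); a parse tree of `R₁ * R₂` (concatenation)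
for `w` is a decomposition `w = u ++ v` with parse trees of `R₁` for `u` and
of `R₂` for `v`; a parse tree of `R*` for `w` is a finite list of words
(possibly empty entries) concatenating to `w` with a parse tree of `R` for each. -/
inductive ParseTree : RegularExpression α → List α → Type u where
  | eps : ParseTree RegularExpression.epsilon []
  | char (a : α) : ParseTree (RegularExpression.char a) [a]
  | plusLeft {R₁ R₂ : RegularExpression α} {w : List α} :
      ParseTree R₁ w → ParseTree (R₁ + R₂) w
  | plusRight {R₁ R₂ : RegularExpression α} {w : List α} :
      ParseTree R₂ w → ParseTree (R₁ + R₂) w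
  | comp {R₁ R₂ : RegularExpression α} {u v : List α} :
      ParseTree R₁ u → ParseTree R₂ v → ParseTree (R₁ * R₂) (u ++ v)
  | starNil {R : RegularExpression α} : ParseTree R.star []
  | starCons {R : RegularExpression α} {u v : List α} :
      ParseTree R u → ParseTree R.star v → ParseTree R.star (u ++ v)

/-- A regex is unambiguous if every word has at most one parse tree of it. -/
def Unambiguous (R : RegularExpression α) : Prop :=
  ∀ (w : List α) (t₁ t₂ : ParseTree R w), t₁ = t₂

/-- A regex is ambiguous if some word has two distinct parse trees of it. -/
def Ambiguous (R : RegularExpression α) : Prop :=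
  ∃ (w : List α) (t₁ t₂ : ParseTree R w), t₁ ≠ t₂

/-- The word `w` has at least `k` distinct parse trees of `R`. -/
def HasAtLeastTrees (R : RegularExpression α) (w : List α) (k : ℕ) : Prop :=
  ∃ l : List (ParseTree R w), l.Nodup ∧ k ≤ l.length

/-- Every word has at most `k` parse trees of `R`. -/
def BoundedBy (R : RegularExpression α) (k : ℕ) : Prop :=
  ∀ (w : List α) (l : List (ParseTree R w)), l.Nodup → l.length ≤ k

/-- `R` is finitely ambiguous: ambiguous, with a uniform bound on the number
of parse trees of any word. -/
def FinitelyAmbiguous (R : RegularExpression α) : Prop :=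
  Ambiguous R ∧ ∃ k : ℕ, BoundedBy R k

/-- `R` is infinitely ambiguous: for every `k` some word has more than `k`
parse trees of `R`. -/
def InfinitelyAmbiguous (R : RegularExpression α) : Prop :=
  ∀ k : ℕ, ∃ w : List α, HasAtLeastTrees R w (k + 1)

/-- Languages `L₁` and `L₂` overlap (nonemptiness of the Brabrand–Thomsen
overlap operator): there are words `x`, `y` and a nonempty word `a` with
`x ∈ L₁`, `x ++ a ∈ L₁`, `a ++ y ∈ L₂`, and `y ∈ L₂`. -/
def Overlaps (L₁ L₂ : Language α) : Prop :=
  ∃ x y a : List α, a ≠ [] ∧ x ∈ L₁ ∧ x ++ a ∈ L₁ ∧ a ++ y ∈ L₂ ∧ y ∈ L₂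

theorem wpow_add (w : List α) (m n : ℕ) : wpow w (m + n) = wpow w m ++ wpow w n := by
  induction m with
  | zero => simp [wpow]
  | succ m ih => simp [Nat.succ_add, wpow, ih]

theorem wpow_length (w : List α) (n : ℕ) : (wpow w n).length = n * w.length := by
  induction n with
  | zero => simp [wpow]
  | succ n ih => simp [wpow, ih, Nat.succ_mul]; ring

/-- Counting claim from the proof of Theorem 2(a), ⟸ direction: with
`c := d ++ e` nonempty, `b ++ c^i ++ d ∈ X` for all `i`, and
`e ++ c^j ++ g ∈ Y` for all `j`, the word `b ++ c^(N+1) ++ g` admits at least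
`N+1` decompositions `u ++ v` with `u ∈ X`, `v ∈ Y`, pairwise distinct in the
prefix `u` (namely `u = b ++ c^i ++ d`, `v = e ++ c^(N-i) ++ g`). -/
theorem stmt_11 {α : Type u} (X Y : Language α) (b d e g : List α)
    (hc : d ++ e ≠ [])
    (hX : ∀ i : ℕ, b ++ wpow (d ++ e) i ++ d ∈ X)
    (hY : ∀ j : ℕ, e ++ wpow (d ++ e) j ++ g ∈ Y) :
    ∀ N : ℕ, ∃ f : Fin (N + 1) → List α × List α,
      Function.Injective (fun i => (f i).1) ∧
      ∀ i : Fin (N + 1), (f i).1 ∈ X ∧ (f i).2 ∈ Y ∧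
        (f i).1 ++ (f i).2 = b ++ wpow (d ++ e) (N + 1) ++ g := by
  intro N
  refine ⟨fun i => (b ++ wpow (d ++ e) i.1 ++ d, e ++ wpow (d ++ e) (N - i.1) ++ g), ?_, ?_⟩
  · intro i j h
    simp only at h
    have hlen := congrArg List.length h
    simp [wpow_length] at hlen
    rcases hlen with h | ⟨hd, he⟩
    · exact Fin.ext h
    · exact absurd (by simp [hd, he]) hc
  · intro i
    refine ⟨hX i.1, hY (N - i.1), ?_⟩
    have hsplit : ∀ k, k ≤ N →
        wpow (d ++ e) (N + 1) = wpow (d ++ e) k ++ (d ++ e) ++ wpow (d ++ e) (N - k) := by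
      intro k hk
      rw [show N + 1 = k + (N - k + 1) by omega, wpow_add]
      simp [wpow]
    simp [hsplit i.1 (Nat.lt_succ_iff.mp i.2)]
end

section
/- Let R be a regex over Σ and suppose there exist words x, y and a nonempty word a such that x ∈ L(R), x ++ a ∈ L(R), a ++ y ∈ L(R*), and y ∈ L(R*). Let s := x ++ a ++ y. Then for every n ≥ 1, the word s^n has at least 2^n distinct parse trees of R*. (Induction core of the proof of Appendix Lemma 2 / Theorem 3 of the paper.) -/
/-! Shared definitions: words, word power, parse trees of regular expressions,
(un)ambiguity, finite/infinite ambiguity, and the Brabrand–Thomsen overlap. -/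

universe u

variable {α : Type u}

/-!
The word `s = x ++ a ++ y` has two parse trees of `R*`, one iterating `R` first on `x`
(then `a ++ y ∈ L(R*)`), the other first on `x ++ a` (then `y ∈ L(R*)`). As `a ≠ []`, their
lists of iterated words start differently, so neither is a prefix of the other. Hence the
`2^n` ways of concatenating `n` copies of these two trees give parse trees of `s^n` whose lists
of iterated words, and so the trees themselves, are pairwise distinct.
-/

namespace ParseTree

variable {R : RegularExpression α}

theorem nonempty_of_mem_matches' : ∀ {w : List α}, w ∈ R.matches' → Nonempty (ParseTree R w) := by
  induction R with
  | zero => intro w h; cases h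
  | epsilon => rintro w rfl; exact ⟨eps⟩
  | char c => rintro w rfl; exact ⟨char c⟩
  | plus R₁ R₂ ih₁ ih₂ =>
    rintro w (h | h)
    · exact ⟨plusLeft (ih₁ h).some⟩
    · exact ⟨plusRight (ih₂ h).some⟩
  | comp R₁ R₂ ih₁ ih₂ =>
    rintro w ⟨u, hu, v, hv, rfl⟩
    exact ⟨comp (ih₁ hu).some (ih₂ hv).some⟩
  | star R ih =>
    intro w h
    obtain ⟨L, rfl, hL⟩ := Language.mem_kstar.mp h
    clear h
    induction L with
    | nil => exact ⟨starNil⟩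
    | cons u L ihL =>
      exact ⟨starCons (ih (hL u List.mem_cons_self)).some
        (ihL fun v hv => hL v (List.mem_cons_of_mem u hv)).some⟩

def cast {w w' : List α} (h : w = w') (t : ParseTree R w) : ParseTree R w' := h ▸ t

def segments : {w : List α} → ParseTree R.star w → List (List α)
  | _, starNil => []
  | _, starCons (u := u) _ t => u :: segments t

@[simp]
theorem segments_cast {w w' : List α} (h : w = w') (t : ParseTree R.star w) :
    segments (t.cast h) = segments t := by
  subst h; rfl

def starAppend : {u v : List α} → ParseTree R.star u → ParseTree R.star v →
    ParseTree R.star (u ++ v)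
  | _, _, starNil, t' => t'
  | _, _, starCons p t, t' => (starCons p (starAppend t t')).cast (List.append_assoc _ _ _).symm

@[simp]
theorem segments_starAppend : ∀ {u v : List α} (t : ParseTree R.star u)
    (t' : ParseTree R.star v), segments (starAppend t t') = segments t ++ segments t'
  | _, _, starNil, _ => by simp [starAppend, segments]
  | _, _, starCons _ t, t' => by simp [starAppend, segments, segments_starAppend t t']

def starPow {s : List α} {β : Type*} (t : β → ParseTree R.star s) :
    (n : ℕ) → (Fin n → β) → ParseTree R.star (wpow s n)
  | 0, _ => starNil
  | n + 1, b => starAppend (t (b 0)) (starPow t n (Fin.tail b))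

theorem segments_starPow_succ {s : List α} {β : Type*} (t : β → ParseTree R.star s) (n : ℕ)
    (b : Fin (n + 1) → β) :
    segments (starPow t (n + 1) b) = segments (t (b 0)) ++ segments (starPow t n (Fin.tail b)) :=
  segments_starAppend _ _

theorem segments_starPow_injective {s : List α} {β : Type*} {t : β → ParseTree R.star s}
    (hcode : ∀ i j g g', segments (t i) ++ g = segments (t j) ++ g' → i = j) (n : ℕ) :
    Function.Injective fun b => segments (starPow t n b) := by
  induction n with
  | zero => intro b b' _; exact Subsingleton.elim b b'
  | succ n ih =>
    intro b b' h
    simp only [segments_starPow_succ] at h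
    have h0 : b 0 = b' 0 := hcode _ _ _ _ h
    rw [h0] at h
    have htail : Fin.tail b = Fin.tail b' := ih (List.append_cancel_left h)
    rw [← Fin.cons_self_tail b, ← Fin.cons_self_tail b', h0, htail]

end ParseTree

theorem hasAtLeastTrees_of_injective {R : RegularExpression α} {w : List α} {β : Type*}
    [Fintype β] {f : β → ParseTree R w} (hf : Function.Injective f) :
    HasAtLeastTrees R w (Fintype.card β) :=
  ⟨Finset.univ.toList.map f, (Finset.nodup_toList _).map hf, by simp⟩

theorem hasAtLeastTrees_star_wpow {R : RegularExpression α} {s : List α} {β : Type*}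
    [Fintype β] (t : β → ParseTree R.star s)
    (hcode : ∀ i j g g', (t i).segments ++ g = (t j).segments ++ g' → i = j) (n : ℕ) :
    HasAtLeastTrees R.star (wpow s n) (Fintype.card β ^ n) := by
  simpa using hasAtLeastTrees_of_injective
    (ParseTree.segments_starPow_injective hcode n).of_comp

/-- Induction core of Appendix Lemma 2 / Theorem 3: if `x ∈ L(R)`,
`x ++ a ∈ L(R)`, `a ++ y ∈ L(R*)`, `y ∈ L(R*)` with `a` nonempty, then for
every `n ≥ 1` the word `(x ++ a ++ y)^n` has at least `2^n` distinct parse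
trees of `R*`. -/
theorem stmt_12 {α : Type u} (R : RegularExpression α) (x y a : List α)
    (ha : a ≠ []) (hx : x ∈ R.matches') (hxa : x ++ a ∈ R.matches')
    (hay : a ++ y ∈ R.star.matches') (hy : y ∈ R.star.matches') :
    ∀ n : ℕ, 1 ≤ n →
      HasAtLeastTrees R.star (wpow (x ++ a ++ y) n) (2 ^ n) := by
  intro n _
  obtain ⟨tx⟩ := ParseTree.nonempty_of_mem_matches' hx
  obtain ⟨txa⟩ := ParseTree.nonempty_of_mem_matches' hxa
  obtain ⟨tay⟩ := ParseTree.nonempty_of_mem_matches' hay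
  obtain ⟨ty⟩ := ParseTree.nonempty_of_mem_matches' hy
  let t : Bool → ParseTree R.star (x ++ a ++ y) := fun
    | false => (ParseTree.starCons tx tay).cast (List.append_assoc x a y).symm
    | true => ParseTree.starCons txa ty
  have hxxa : x ≠ x ++ a := by simpa using ha.symm
  have hcode : ∀ i j g g', (t i).segments ++ g = (t j).segments ++ g' → i = j := by
    rintro (_ | _) (_ | _) g g' h <;> simp_all [t, ParseTree.segments]
  simpa using hasAtLeastTrees_star_wpow t hcode n
end
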